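/- (Estimation error bound via condition number) Suppose f* and f♯ are random feature models with coefficient vectors c* and c♯ = A†y in ℂ^N, where A is the random feature matrix and y_j = f(x_j). If f*−f♯ is L_f-Lipschitz on compact D ⊂ ℝ^d, then ‖f*−f♯‖²_{L²(D)} ≤ 2L_f² h_X² vol(D) + C h_X^d ‖A‖₂² ‖c*−c♯‖₂², where h_X is the fill-in distance of X={x_j} and C depends only on d. -/

import Mathlib

/-!
Cover the compact domain `D` by the balls of radius `h_X` around the samples and refine this
cover to a finite measurable partition. On the piece attached to `x_j`, the Lipschitz bound gives
`‖g‖² ≤ 2 L² h_X² + 2 ‖g(x_j)‖²` for `g = f* − f♯`; integrating, the first term sums to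
`2 L² h_X² vol(D)` and the second is at most `2 vol(B(0,1)) h_X^d Σ_j ‖g(x_j)‖²`. Finally
`(g(x_j))_j = A (c* − c♯)`, whose squared norm is at most `‖A‖₂² ‖c* − c♯‖₂²`.
-/

open MeasureTheory
open scoped BigOperators Matrix Matrix.Norms.L2Operator

noncomputable section

open Function Metric

section FillDistance

variable {E ι : Type*} [PseudoMetricSpace E]

def fillDistance (D : Set E) (x : ι → E) : ℝ :=
  ⨆ p : D, ⨅ j, dist (p : E) (x j)

theorem fillDistance_nonneg (D : Set E) (x : ι → E) : 0 ≤ fillDistance D x :=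
  Real.iSup_nonneg fun _ => Real.iInf_nonneg fun _ => dist_nonneg

theorem exists_dist_le_fillDistance [Finite ι] [Nonempty ι] {D : Set E} {x : ι → E}
    (hD : Bornology.IsBounded D) (hx : ∀ j, x j ∈ D) {p : E} (hp : p ∈ D) :
    ∃ j, dist p (x j) ≤ fillDistance D x := by
  obtain ⟨j, hj⟩ := exists_eq_ciInf_of_finite (f := fun j => dist p (x j))
  refine ⟨j, hj ▸ le_ciSup (f := fun q : D => ⨅ j, dist (q : E) (x j)) ?_ ⟨p, hp⟩⟩
  obtain ⟨j₀⟩ := ‹Nonempty ι›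
  refine ⟨diam D, Set.forall_mem_range.2 fun q => ?_⟩
  exact (ciInf_le (Finite.bddBelow_range _) j₀).trans (dist_le_diam_of_mem hD q.2 (hx j₀))

end FillDistance

theorem measurableSet_disjointed {X ι : Type*} [MeasurableSpace X] [Preorder ι]
    [LocallyFiniteOrderBot ι] {s : ι → Set X} (hs : ∀ i, MeasurableSet (s i)) (i : ι) :
    MeasurableSet (disjointed s i) := by
  rw [disjointed_apply, Finset.sup_set_eq_biUnion]
  exact (hs i).diff (Finset.measurableSet_biUnion _ fun j _ => hs j)

theorem exists_disjoint_measurable_refinement {X ι : Type*} [MeasurableSpace X] [Finite ι]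
    {s : ι → Set X} (hs : ∀ i, MeasurableSet (s i)) :
    ∃ t : ι → Set X, (∀ i, MeasurableSet (t i)) ∧ Pairwise (Disjoint on t) ∧
      (∀ i, t i ⊆ s i) ∧ ⋃ i, t i = ⋃ i, s i := by
  obtain ⟨n, ⟨e⟩⟩ := Finite.exists_equiv_fin ι
  refine ⟨fun i => disjointed (s ∘ e.symm) (e i), fun i => measurableSet_disjointed
    (fun _ => hs _) _, (disjoint_disjointed _).comp_of_injective e.injective, fun i => ?_, ?_⟩
  · simpa using disjointed_subset (s ∘ e.symm) (e i)
  · rw [e.surjective.iUnion_comp (disjointed (s ∘ e.symm)), iUnion_disjointed]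
    exact e.symm.surjective.iUnion_comp s

theorem setIntegral_le_sum_measureReal_mul {X ι : Type*} [MeasurableSpace X] {μ : Measure X}
    [Fintype ι] {s : ι → Set X} {f : X → ℝ} {b : ι → ℝ} (hs : ∀ i, MeasurableSet (s i))
    (hdisj : Pairwise (Disjoint on s)) (hfin : ∀ i, μ (s i) < ⊤)
    (hf : IntegrableOn f (⋃ i, s i) μ) (hb : ∀ i, ∀ x ∈ s i, f x ≤ b i) :
    ∫ x in ⋃ i, s i, f x ∂μ ≤ ∑ i, μ.real (s i) * b i := by
  rw [integral_iUnion_fintype hs hdisj fun i => hf.mono_set (Set.subset_iUnion s i)]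
  gcongr with i
  calc ∫ x in s i, f x ∂μ ≤ ∫ _ in s i, b i ∂μ :=
        setIntegral_mono_on (hf.mono_set (Set.subset_iUnion s i))
          (integrableOn_const (hfin i).ne) (hs i) (hb i)
    _ = μ.real (s i) * b i := by rw [setIntegral_const, smul_eq_mul]

theorem Matrix.sum_norm_sq_mulVec_le {𝕜 m n : Type*} [RCLike 𝕜] [Fintype m] [Fintype n]
    [DecidableEq n] (A : Matrix m n 𝕜) (v : n → 𝕜) :
    ∑ i, ‖(A *ᵥ v) i‖ ^ 2 ≤ ‖A‖ ^ 2 * ∑ j, ‖v j‖ ^ 2 := by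
  have h := pow_le_pow_left₀ (norm_nonneg _) (A.l2_opNorm_mulVec (WithLp.toLp 2 v)) 2
  rwa [mul_pow, EuclideanSpace.norm_sq_eq, EuclideanSpace.norm_sq_eq] at h

theorem norm_sq_le_of_norm_sub_sq_le {F : Type*} [SeminormedAddCommGroup F] {a b : F} {r : ℝ}
    (h : ‖a - b‖ ^ 2 ≤ r) : ‖a‖ ^ 2 ≤ 2 * r + 2 * ‖b‖ ^ 2 := by
  have htri : ‖a‖ - ‖b‖ ≤ ‖a - b‖ := norm_sub_norm_le a b
  nlinarith [sq_nonneg (‖a - b‖ - ‖b‖), norm_nonneg a]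

theorem setIntegral_norm_sq_le_of_lipschitzOn_of_cover {E F ι : Type*} [MetricSpace E]
    [MeasurableSpace E] [OpensMeasurableSpace E] [NormedAddCommGroup F] {μ : Measure E}
    [IsFiniteMeasureOnCompacts μ] [Fintype ι] {D : Set E} (hD : IsCompact D) {x : ι → E}
    (hx : ∀ j, x j ∈ D) {h : ℝ} (hcover : ∀ p ∈ D, ∃ j, dist p (x j) ≤ h) {g : E → F} {L : ℝ}
    (hg : ∀ p ∈ D, ∀ q ∈ D, ‖g p - g q‖ ≤ L * dist p q) :
    ∫ p in D, ‖g p‖ ^ 2 ∂μ ≤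
      2 * L ^ 2 * h ^ 2 * μ.real D + 2 * ∑ j, μ.real (D ∩ closedBall (x j) h) * ‖g (x j)‖ ^ 2 := by
  obtain ⟨W, hWm, hWdisj, hWsub, hWunion⟩ := exists_disjoint_measurable_refinement
    (s := fun j => D ∩ closedBall (x j) h) fun j => hD.measurableSet.inter measurableSet_closedBall
  have hDW : ⋃ j, W j = D := by
    rw [hWunion, ← Set.inter_iUnion, Set.inter_eq_left]
    intro p hp
    obtain ⟨j, hj⟩ := hcover p hp
    exact Set.mem_iUnion.2 ⟨j, hj⟩
  have hfin : ∀ j, μ (D ∩ closedBall (x j) h) < ⊤ := fun j =>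
    (measure_mono Set.inter_subset_left).trans_lt hD.measure_lt_top
  have hWfin : ∀ j, μ (W j) < ⊤ := fun j => (measure_mono (hWsub j)).trans_lt (hfin j)
  have hpoint : ∀ j, ∀ p ∈ W j, ‖g p‖ ^ 2 ≤ 2 * (L ^ 2 * h ^ 2) + 2 * ‖g (x j)‖ ^ 2 := by
    intro j p hp
    obtain ⟨hpD, hph⟩ := hWsub j hp
    refine norm_sq_le_of_norm_sub_sq_le ?_
    calc ‖g p - g (x j)‖ ^ 2 ≤ (L * dist p (x j)) ^ 2 :=
          pow_le_pow_left₀ (norm_nonneg _) (hg p hpD (x j) (hx j)) 2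
      _ ≤ L ^ 2 * h ^ 2 := by rw [mul_pow]; gcongr; exact mem_closedBall.1 hph
  have hint : IntegrableOn (fun p => ‖g p‖ ^ 2) D μ := by
    have hcont : ContinuousOn g D := (LipschitzOnWith.of_dist_le' fun p hp q hq => by
      rw [dist_eq_norm]; exact hg p hp q hq).continuousOn
    exact (hcont.norm.pow 2).integrableOn_compact hD
  calc ∫ p in D, ‖g p‖ ^ 2 ∂μ
      ≤ ∑ j, μ.real (W j) * (2 * (L ^ 2 * h ^ 2) + 2 * ‖g (x j)‖ ^ 2) := by
        rw [← hDW] at hint ⊢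
        exact setIntegral_le_sum_measureReal_mul hWm hWdisj hWfin hint hpoint
    _ = 2 * L ^ 2 * h ^ 2 * μ.real (⋃ j, W j) + 2 * ∑ j, μ.real (W j) * ‖g (x j)‖ ^ 2 := by
        rw [measureReal_iUnion_fintype hWdisj hWm fun j => (hWfin j).ne, Finset.mul_sum,
          Finset.mul_sum, ← Finset.sum_add_distrib]
        exact Finset.sum_congr rfl fun j _ => by ring
    _ ≤ 2 * L ^ 2 * h ^ 2 * μ.real D +
          2 * ∑ j, μ.real (D ∩ closedBall (x j) h) * ‖g (x j)‖ ^ 2 := by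
        rw [hDW]
        gcongr with j
        exacts [(hfin j).ne, hWsub j]

/-- Estimation error bound via condition number: for random feature models
`f*(x) = Σ_k c*_k e^{i⟨ω_k,x⟩}` and `f♯(x) = Σ_k c♯_k e^{i⟨ω_k,x⟩}` with `c♯ = A†y`,
`y_j = f(x_j)`, if `f* − f♯` is `L_f`-Lipschitz on compact `D ⊂ ℝ^d`, then
`‖f*−f♯‖²_{L²(D)} ≤ 2L_f² h_X² vol(D) + C h_X^d ‖A‖₂² ‖c*−c♯‖₂²`,
where `h_X` is the fill-in distance and `C > 0` depends only on `d`. -/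
theorem estimation_error_bound (d : ℕ) :
    ∃ C : ℝ, 0 < C ∧
      ∀ (m N : ℕ), 0 < m → 0 < N →
        ∀ (D : Set (EuclideanSpace ℝ (Fin d))), IsCompact D →
          ∀ (x : Fin m → EuclideanSpace ℝ (Fin d)), (∀ j, x j ∈ D) →
            ∀ (ω : Fin N → EuclideanSpace ℝ (Fin d))
              (A : Matrix (Fin m) (Fin N) ℂ),
              (A = Matrix.of fun j k => Complex.exp (Complex.I * (∑ i, ω k i * x j i))) →
              ∀ (f : EuclideanSpace ℝ (Fin d) → ℂ) (y : Fin m → ℂ), (∀ j, y j = f (x j)) →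
                ∀ (cstar csharp : Fin N → ℂ),
                  csharp = (Aᴴ * (A * Aᴴ)⁻¹).mulVec y →
                  ∀ (fstar fsharp : EuclideanSpace ℝ (Fin d) → ℂ),
                    (∀ p, fstar p = ∑ k, cstar k *
                        Complex.exp (Complex.I * (∑ i, ω k i * p i))) →
                    (∀ p, fsharp p = ∑ k, csharp k *
                        Complex.exp (Complex.I * (∑ i, ω k i * p i))) →
                    ∀ (Lf hX : ℝ), 0 ≤ Lf →
                      (∀ p ∈ D, ∀ q ∈ D,
                        ‖(fstar p - fsharp p) - (fstar q - fsharp q)‖ ≤ Lf * dist p q) →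
                      hX = ⨆ p : D, ⨅ j : Fin m,
                          dist (p : EuclideanSpace ℝ (Fin d)) (x j) →
                      (∫ p in D, ‖fstar p - fsharp p‖ ^ 2) ≤
                        2 * Lf ^ 2 * hX ^ 2 * (volume D).toReal +
                          C * hX ^ d * ‖A‖ ^ 2 *
                            ∑ k, ‖cstar k - csharp k‖ ^ 2 := by
  set c := (volume : Measure (EuclideanSpace ℝ (Fin d))).real (ball 0 1)
  have hc : 0 < c :=
    ENNReal.toReal_pos (measure_ball_pos volume 0 one_pos).ne' measure_ball_lt_top.ne
  refine ⟨2 * c, by positivity, ?_⟩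
  intro m N hm _ D hD x hx ω A hA f y _ cstar csharp _ fstar fsharp hfs hfsh Lf hX _ hLip hhX
  have : Nonempty (Fin m) := ⟨⟨0, hm⟩⟩
  have hX0 : 0 ≤ hX := hhX ▸ fillDistance_nonneg D x
  have hcover : ∀ p ∈ D, ∃ j, dist p (x j) ≤ hX := fun p hp =>
    hhX ▸ exists_dist_le_fillDistance hD.isBounded hx hp
  have hball : ∀ j, volume.real (D ∩ closedBall (x j) hX) ≤ hX ^ d * c := fun j => by
    simpa [finrank_euclideanSpace_fin] using (measureReal_mono Set.inter_subset_right
      measure_closedBall_lt_top.ne).trans_eq (Measure.addHaar_real_closedBall volume (x j) hX0)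
  have hsample : ∀ j, fstar (x j) - fsharp (x j) = (A *ᵥ (cstar - csharp)) j := by
    intro j
    simp [hA, hfs, hfsh, Matrix.mulVec, dotProduct, mul_comm, sub_mul, Finset.sum_sub_distrib]
  calc ∫ p in D, ‖fstar p - fsharp p‖ ^ 2
      ≤ 2 * Lf ^ 2 * hX ^ 2 * (volume D).toReal +
          2 * ∑ j, volume.real (D ∩ closedBall (x j) hX) * ‖fstar (x j) - fsharp (x j)‖ ^ 2 :=
        setIntegral_norm_sq_le_of_lipschitzOn_of_cover hD hx hcover hLip
    _ ≤ 2 * Lf ^ 2 * hX ^ 2 * (volume D).toReal +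
          2 * ∑ j, hX ^ d * c * ‖(A *ᵥ (cstar - csharp)) j‖ ^ 2 := by
        simp only [hsample]
        gcongr with j
        exact hball j
    _ = 2 * Lf ^ 2 * hX ^ 2 * (volume D).toReal +
          2 * c * hX ^ d * ∑ j, ‖(A *ᵥ (cstar - csharp)) j‖ ^ 2 := by
        rw [← Finset.mul_sum]
        ring
    _ ≤ _ := by
        rw [mul_assoc (2 * c * hX ^ d)]
        gcongr
        exact Matrix.sum_norm_sq_mulVec_le A _
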